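/- arXiv:2404.09874 — 5 statements merged into one kernel-verified Lean document; each statement's English description precedes it below -/
import Mathlib

section
/- A finite group $G$ is almost complete (i.e., center-free and the natural surjection $\mathrm{Aut}(G) \to \mathrm{Out}(G)$ admits a group-theoretic section) if and only if every short exact sequence of groups $1 \to G \to E \to Q \to 1$ (with $E$ any group) splits, i.e., admits a homomorphic section $Q \to E$. -/
/-- The subgroup of inner automorphisms of a group `G`. -/
def Inn (G : Type*) [Group G] : Subgroup (MulAut G) :=
  (MulAut.conj : G →* MulAut G).range

instance Inn.normal (G : Type*) [Group G] : (Inn G).Normal := by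
  constructor
  rintro x ⟨g, rfl⟩ φ
  refine ⟨φ g, ?_⟩
  ext h
  show MulAut.conj (φ g) h = (φ * MulAut.conj g * φ⁻¹) h
  simp [MulAut.conj_apply, MulAut.mul_apply, map_mul, map_inv]

/-- A group `G` is *almost complete* if it is center-free and the natural surjection
`Aut(G) → Out(G) = Aut(G)/Inn(G)` admits a group-theoretic section. -/
def AlmostComplete (G : Type*) [Group G] : Prop :=
  Subgroup.center G = ⊥ ∧
    ∃ s : (MulAut G ⧸ Inn G) →* MulAut G,
      (QuotientGroup.mk' (Inn G)).comp s = MonoidHom.id (MulAut G ⧸ Inn G)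

/-!
If `G` is center-free and `σ` splits `Aut G → Out G`, then in an extension `1 → G → E → Q → 1`
the elements of `E` acting on `G` by `σ` of their own outer class form a complement of `G`: such
an element lying in `G` acts by `σ 1 = 1`, so it is central and hence trivial, and every coset of
`G` contains one after correcting by an inner automorphism. Conversely, once
`Z(G) = 1` the extension `1 → G → Aut G → Out G → 1` splits by hypothesis. For the center, adjoin
to `G` a central `n`-th root `t` of a central `z`, with `n` the exponent of `G`: a splitting of
the quotient by `G` lifts the class of `t` to some `t a` of order dividing `n`, yet
`(t a)ⁿ = tⁿ aⁿ = z`.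
-/

universe u

open Subgroup

theorem MulAut.conj_injective_of_center_eq_bot {G : Type*} [Group G] (hG : center G = ⊥) :
    Function.Injective (MulAut.conj : G →* MulAut G) := by
  rw [injective_iff_map_eq_one]
  intro a ha
  rw [← mem_bot, ← hG, mem_center_iff]
  intro g
  have hg : a * g * a⁻¹ = g := DFunLike.congr_fun ha g
  rw [mul_inv_eq_iff_eq_mul] at hg
  exact hg.symm

namespace GroupExtension

variable {N E G : Type*} [Group N] [Group E] [Group G] (S : GroupExtension N E G)

theorem conjAct_inl (n : N) : S.conjAct (S.inl n) = MulAut.conj n := by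
  ext m
  apply S.inl_injective
  rw [inl_conjAct_comm, MulAut.conj_apply, map_mul, map_mul, map_inv]

noncomputable def splittingOfBijective {K : Subgroup E}
    (hK : Function.Bijective (S.rightHom.domRestrict K)) : S.Splitting where
  toMonoidHom := K.subtype.comp (MulEquiv.ofBijective _ hK).symm.toMonoidHom
  rightInverse_rightHom := (MulEquiv.ofBijective _ hK).apply_symm_apply

theorem nonempty_splitting_of_almostComplete (hN : AlmostComplete N) : Nonempty S.Splitting := by
  obtain ⟨hZ, σ, hσ⟩ := hN
  let π := QuotientGroup.mk' (Inn N)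
  let τ : E →* MulAut N := σ.comp (π.comp S.conjAct)
  have hπ_conj (n : N) : π (MulAut.conj n) = 1 := by
    rw [← MonoidHom.mem_ker, QuotientGroup.ker_mk']
    exact ⟨n, rfl⟩
  have hτ_inl (n : N) : τ (S.inl n) = 1 := by
    simp only [τ, MonoidHom.comp_apply, conjAct_inl, hπ_conj, map_one]
  have hτ_mem_Inn (e : E) : S.conjAct e * (τ e)⁻¹ ∈ Inn N := by
    rw [← QuotientGroup.ker_mk' (Inn N), MonoidHom.mem_ker, map_mul, map_inv, mul_inv_eq_one]
    exact (DFunLike.congr_fun hσ (π (S.conjAct e))).symm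
  refine ⟨S.splittingOfBijective (K := S.conjAct.eqLocus τ) ⟨?_, ?_⟩⟩
  · rw [injective_iff_map_eq_one]
    rintro ⟨k, hk⟩ hk1
    obtain ⟨n, rfl⟩ : k ∈ S.inl.range := S.range_inl_eq_ker_rightHom ▸ hk1
    have hn : MulAut.conj n = 1 := by
      rw [← S.conjAct_inl, ← hτ_inl n]
      exact hk
    obtain rfl : n = 1 := MulAut.conj_injective_of_center_eq_bot hZ (hn.trans (map_one _).symm)
    exact Subtype.ext (map_one _)
  · intro q
    obtain ⟨e, rfl⟩ := S.rightHom_surjective q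
    obtain ⟨n, hn⟩ := hτ_mem_Inn e
    refine ⟨⟨(S.inl n)⁻¹ * e, ?_⟩, ?_⟩
    · show S.conjAct ((S.inl n)⁻¹ * e) = τ ((S.inl n)⁻¹ * e)
      rw [map_mul, map_mul, map_inv, map_inv, conjAct_inl, hτ_inl, hn]
      group
    · simp

theorem pow_eq_one_of_commute_inl (s : S.Splitting) {x : E} (hx : ∀ n, Commute x (S.inl n))
    {m : ℕ} (hxm : S.rightHom x ^ m = 1) (hN : ∀ n : N, n ^ m = 1) : x ^ m = 1 := by
  obtain ⟨n, hn⟩ : x⁻¹ * s (S.rightHom x) ∈ S.inl.range := by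
    rw [S.range_inl_eq_ker_rightHom, MonoidHom.mem_ker, map_mul, map_inv,
      s.rightHom_splitting, inv_mul_cancel]
  have hs : s (S.rightHom x) = x * S.inl n := by rw [hn, mul_inv_cancel_left]
  calc x ^ m = (x * S.inl n) ^ m := by rw [(hx n).mul_pow, ← map_pow, hN, map_one, mul_one]
    _ = 1 := by rw [← hs, ← map_pow, hxm, map_one]

end GroupExtension

section CentralRoot

variable {G : Type*} [Group G]

def AdjoinCentralRoot.relations (z : center G) (n : ℤ) : Subgroup (G × Multiplicative ℤ) :=
  zpowers ((z : G)⁻¹, Multiplicative.ofAdd n)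

instance (z : center G) (n : ℤ) : (AdjoinCentralRoot.relations z n).Normal where
  conj_mem x hx g := by
    have hcentral : x ∈ center (G × Multiplicative ℤ) := by
      refine zpowers_le.mpr ?_ hx
      rw [mem_center_iff]
      rintro ⟨a, b⟩
      exact Prod.ext (mem_center_iff.mp (inv_mem z.2) a) (mul_comm _ _)
    rw [(mem_center_iff.mp hcentral g), mul_inv_cancel_right]
    exact hx

/-- `G` with a central `n`-th root `t` of `z` adjoined: `(G × ⟨t⟩) ⧸ ⟨(z⁻¹, tⁿ)⟩`. -/
abbrev AdjoinCentralRoot (z : center G) (n : ℤ) :=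
  (G × Multiplicative ℤ) ⧸ AdjoinCentralRoot.relations z n

namespace AdjoinCentralRoot

variable (z : center G) (n : ℤ)

def inl : G →* AdjoinCentralRoot z n :=
  (QuotientGroup.mk' _).comp (MonoidHom.inl G _)

def root : AdjoinCentralRoot z n :=
  QuotientGroup.mk ((1 : G), Multiplicative.ofAdd (1 : ℤ))

theorem root_zpow : root z n ^ n = inl z n z := by
  rw [root, ← QuotientGroup.mk_zpow, inl, MonoidHom.comp_apply, QuotientGroup.mk'_apply,
    QuotientGroup.eq]
  refine ⟨-1, Prod.ext (by simp) ?_⟩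
  simp [← ofAdd_zsmul]

theorem commute_root_inl (a : G) : Commute (root z n) (inl z n a) :=
  ((Commute.one_left a).prod (Commute.all _ 1)).map (QuotientGroup.mk' (relations z n))

instance : (inl z n).range.Normal := by
  have hrange : (MonoidHom.inl G (Multiplicative ℤ)).range = (MonoidHom.snd G _).ker := by
    ext ⟨a, b⟩
    simp [eq_comm, mem_prod]
  rw [inl, MonoidHom.range_comp, hrange]
  exact (MonoidHom.normal_ker _).map _ (QuotientGroup.mk'_surjective _)

theorem inl_injective (hn : n ≠ 0) : Function.Injective (inl z n) := by
  rw [injective_iff_map_eq_one]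
  intro a ha
  obtain ⟨j, hj⟩ := (QuotientGroup.eq_one_iff _).mp ha
  have hj0 : j = 0 := by
    have := congrArg (fun x => Multiplicative.toAdd x.2) hj
    simpa [hn] using this
  simpa [hj0] using (congrArg Prod.fst hj).symm

end AdjoinCentralRoot

end CentralRoot

theorem center_eq_bot_of_forall_nonempty_splitting {G : Type u} [Group G]
    (hG : Monoid.exponent G ≠ 0)
    (h : ∀ (E Q : Type u) [Group E] [Group Q] (S : GroupExtension G E Q), Nonempty S.Splitting) :
    center G = ⊥ := by
  refine (eq_bot_iff_forall _).mpr fun z hz => ?_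
  set n := Monoid.exponent G
  have hn : (n : ℤ) ≠ 0 := Int.natCast_ne_zero.mpr hG
  let z' : center G := ⟨z, hz⟩
  let ι := AdjoinCentralRoot.inl z' n
  let S : GroupExtension G (AdjoinCentralRoot z' n) (AdjoinCentralRoot z' n ⧸ ι.range) :=
    { inl := ι
      rightHom := QuotientGroup.mk' ι.range
      inl_injective := AdjoinCentralRoot.inl_injective z' n hn
      range_inl_eq_ker_rightHom := (QuotientGroup.ker_mk' _).symm
      rightHom_surjective := QuotientGroup.mk'_surjective _ }
  obtain ⟨s⟩ := h _ _ S
  have hroot_pow : AdjoinCentralRoot.root z' n ^ n = ι z := by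
    rw [← zpow_natCast, AdjoinCentralRoot.root_zpow]
  have hroot : AdjoinCentralRoot.root z' n ^ n = 1 := by
    refine S.pow_eq_one_of_commute_inl s (AdjoinCentralRoot.commute_root_inl z' n) ?_
      Monoid.pow_exponent_eq_one
    rw [← map_pow, hroot_pow, ← MonoidHom.mem_ker, QuotientGroup.ker_mk']
    exact ⟨z, rfl⟩
  exact AdjoinCentralRoot.inl_injective z' n hn
    (hroot_pow.symm.trans (hroot.trans (map_one ι).symm))

def autExtension {G : Type*} [Group G] (hG : center G = ⊥) :
    GroupExtension G (MulAut G) (MulAut G ⧸ Inn G) where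
  inl := MulAut.conj
  rightHom := QuotientGroup.mk' (Inn G)
  inl_injective := MulAut.conj_injective_of_center_eq_bot hG
  range_inl_eq_ker_rightHom := (QuotientGroup.ker_mk' (Inn G)).symm
  rightHom_surjective := QuotientGroup.mk'_surjective _

/-- A finite group `G` is almost complete if and only if every short exact
sequence of groups `1 → G → E → Q → 1` splits, i.e. admits a homomorphic section `Q → E`. -/
theorem statement2 (G : Type u) [Group G] [Finite G] :
    AlmostComplete G ↔
      ∀ (E Q : Type u) (_ : Group E) (_ : Group Q) (f : G →* E) (g : E →* Q),
        Function.Injective f → Function.Surjective g → f.range = g.ker →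
          ∃ s : Q →* E, g.comp s = MonoidHom.id Q := by
  constructor
  · intro hG E Q _ _ f g hf hg hfg
    obtain ⟨s⟩ := (GroupExtension.mk f g hf hfg hg).nonempty_splitting_of_almostComplete hG
    exact ⟨s, s.rightHom_comp_splitting⟩
  · intro h
    have hsplit (E Q : Type u) [Group E] [Group Q] (S : GroupExtension G E Q) :
        Nonempty S.Splitting := by
      obtain ⟨s, hs⟩ :=
        h E Q _ _ S.inl S.rightHom S.inl_injective S.rightHom_surjective S.range_inl_eq_ker_rightHom
      exact ⟨{ toMonoidHom := s, rightInverse_rightHom := DFunLike.congr_fun hs }⟩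
    have hZ := center_eq_bot_of_forall_nonempty_splitting Monoid.exponent_ne_zero_of_finite hsplit
    obtain ⟨s⟩ := hsplit _ _ (autExtension hZ)
    exact ⟨hZ, s, s.rightHom_comp_splitting⟩
end

section
/- Let $G$ be a finite group that is almost complete and indecomposable. Then for every positive integer $t$, the group $G^t$ is almost complete. -/
/-- A group is *indecomposable* if it cannot be written as a direct product of two
nontrivial groups. -/
def Indecomposable (N : Type u) [Group N] : Prop :=
  ∀ (A B : Type u) (_ : Group A) (_ : Group B),
    Nonempty (N ≃* A × B) → Subsingleton A ∨ Subsingleton B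

/-!
Write `Nᵢ` for the `i`-th coordinate copy of `G` in `Gᵗ`. When `G` is centerless, an element
whose commutators with everything lie in an automorphic image `K = φ(Nᵢ)` lies in `K`. The
coordinate projections satisfy `⁅πⱼ n, h⁆ = ⁅n, πⱼ h⁆`, so each `πⱼ` maps `K` into itself and
`K ≅ G` splits as `(K ⊓ Nⱼ) × (K ⊓ ker evⱼ)`; indecomposability then gives `K = Nⱼ` for some `j`.
Hence automorphisms permute the factors and `Aut(Gᵗ) ≅ Aut(G)ᵗ ⋊ Sₜ`. A section of
`Aut G → Out G` is the same as an endomorphism `r` of `Aut G` killing `Inn G` and inducing the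
identity on `Out G`; applied coordinatewise, `r` is an endomorphism of the wreath product that
kills `Inn(Gᵗ) = Inn(G)ᵗ` and is the identity modulo it.
-/

universe u

open scoped commutatorElement

theorem QuotientGroup.exists_section_mk'_iff {A : Type*} [Group A] (N : Subgroup A) [N.Normal] :
    (∃ s : A ⧸ N →* A, (mk' N).comp s = MonoidHom.id (A ⧸ N)) ↔
      ∃ r : A →* A, N ≤ r.ker ∧ (mk' N).comp r = mk' N := by
  constructor
  · rintro ⟨s, hs⟩
    refine ⟨s.comp (mk' N), fun x hx => ?_, ?_⟩
    · rw [MonoidHom.mem_ker, MonoidHom.comp_apply, mk'_apply, (eq_one_iff x).mpr hx, map_one]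
    · rw [← MonoidHom.comp_assoc, hs, MonoidHom.id_comp]
  · rintro ⟨r, hN, hr⟩
    refine ⟨lift N r hN, monoidHom_ext N ?_⟩
    rw [MonoidHom.comp_assoc, lift_comp_mk', hr, MonoidHom.id_comp]

theorem almostComplete_iff (G : Type*) [Group G] :
    AlmostComplete G ↔ Subgroup.center G = ⊥ ∧
      ∃ r : MulAut G →* MulAut G,
        Inn G ≤ r.ker ∧ (QuotientGroup.mk' (Inn G)).comp r = QuotientGroup.mk' (Inn G) :=
  and_congr_right fun _ => QuotientGroup.exists_section_mk'_iff (Inn G)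

theorem Indecomposable.eq_bot_or_eq_bot {G : Type u} [Group G] (hG : Indecomposable G)
    {A B : Subgroup G} [A.Normal] [B.Normal] (hAB : A ⊓ B = ⊥) (hsup : A ⊔ B = ⊤) :
    A = ⊥ ∨ B = ⊥ := by
  have hdisj : Disjoint A B := disjoint_iff.mpr hAB
  let e : A × B →* G := A.subtype.noncommCoprod B.subtype fun a b =>
    Subgroup.commute_of_normal_of_disjoint A B ‹_› ‹_› hdisj a b a.2 b.2
  have he : Function.Bijective e := by
    refine ⟨(injective_iff_map_eq_one e).mpr fun ⟨a, b⟩ hab => ?_, fun g => ?_⟩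
    · have ha : (a : G) = (b : G)⁻¹ := eq_inv_of_mul_eq_one_left hab
      have hb : (b : G) = 1 := by
        refine (Subgroup.mem_bot).mp (hAB ▸ ⟨?_, b.2⟩)
        simpa [ha] using a.2
      ext <;> simp [ha, hb]
    · obtain ⟨a, ha, b, hb, rfl⟩ := Subgroup.mem_sup_of_normal_right.mp (hsup ▸ Subgroup.mem_top g)
      exact ⟨(⟨a, ha⟩, ⟨b, hb⟩), rfl⟩
  refine (hG A B _ _ ⟨(MulEquiv.ofBijective e he).symm⟩).imp ?_ ?_ <;>
    exact fun _ => Subgroup.eq_bot_of_subsingleton _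

theorem eq_one_of_forall_commute {G : Type*} [Group G] (hZ : Subgroup.center G = ⊥) {z : G}
    (hz : ∀ g, Commute z g) : z = 1 :=
  Subgroup.mem_bot.mp (hZ ▸ Subgroup.mem_center_iff.mpr fun g => (hz g).symm.eq)

section PiFactor

variable {ι G : Type*} [DecidableEq ι] [Group G]

omit [DecidableEq ι] in
@[simp] theorem Pi.commutatorElement_apply (f h : ι → G) (i : ι) : ⁅f, h⁆ i = ⁅f i, h i⁆ := rfl

variable (G) in
def piFactor (i : ι) : Subgroup (ι → G) :=
  (MonoidHom.mulSingle (fun _ => G) i).range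

theorem mem_piFactor {i : ι} {f : ι → G} : f ∈ piFactor G i ↔ ∀ j, j ≠ i → f j = 1 := by
  refine ⟨?_, fun hf => ⟨f i, funext fun j => ?_⟩⟩
  · rintro ⟨g, rfl⟩ j hj
    exact Pi.mulSingle_eq_of_ne (M := fun _ => G) hj g
  · by_cases hj : j = i
    · subst hj; simp
    · simp [Pi.mulSingle_eq_of_ne hj, hf j hj]

instance piFactor_normal (i : ι) : (piFactor G i).Normal :=
  ⟨fun f hf g => mem_piFactor.mpr fun j hj => by simp [mem_piFactor.mp hf j hj]⟩

theorem mulSingle_mem_piFactor (i : ι) (g : G) : Pi.mulSingle i g ∈ piFactor G i :=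
  ⟨g, rfl⟩

theorem mulSingle_apply_self_of_mem_piFactor {i : ι} {f : ι → G} (hf : f ∈ piFactor G i) :
    Pi.mulSingle i (f i) = f := by
  obtain ⟨g, rfl⟩ := hf
  simp

theorem eq_of_piFactor_le [Nontrivial G] {i j : ι} (h : piFactor G i ≤ piFactor G j) :
    i = j := by
  by_contra hij
  obtain ⟨g, hg⟩ := exists_ne (1 : G)
  exact hg (by simpa using mem_piFactor.mp (h (mulSingle_mem_piFactor i g)) i hij)

theorem commute_mulSingle_of_apply_eq_one {j : ι} {f : ι → G} (hf : f j = 1) (g : G) :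
    Commute f (Pi.mulSingle j g) := by
  refine funext fun k => ?_
  by_cases hk : k = j
  · subst hk; simp [hf]
  · simp [Pi.mulSingle_eq_of_ne hk]

theorem apply_eq_one_of_forall_commute (hZ : Subgroup.center G = ⊥) {j : ι} {f : ι → G}
    (hf : ∀ g, Commute f (Pi.mulSingle j g)) : f j = 1 :=
  eq_one_of_forall_commute hZ fun g => (by simpa using congr_fun (hf g).eq j : f j * g = g * f j)

theorem commutator_mulSingle_apply (i : ι) (f h : ι → G) :
    ⁅(Pi.mulSingle i (f i) : ι → G), h⁆ = ⁅f, Pi.mulSingle i (h i)⁆ := by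
  refine funext fun j => ?_
  by_cases hj : j = i
  · subst hj; simp
  · simp [Pi.mulSingle_eq_of_ne hj]

theorem mem_piFactor_of_forall_commutator_mem (hZ : Subgroup.center G = ⊥) {i : ι} {a : ι → G}
    (ha : ∀ h : ι → G, ⁅a, h⁆ ∈ piFactor G i) : a ∈ piFactor G i := by
  refine mem_piFactor.mpr fun j hj => eq_one_of_forall_commute hZ fun g => ?_
  have := mem_piFactor.mp (ha (Pi.mulSingle j g)) j hj
  simpa [commutatorElement_eq_one_iff_commute] using this

end PiFactor

section AutPi

variable {ι : Type*} [DecidableEq ι] {G : Type u} [Group G]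

theorem mulSingle_apply_mem_map_piFactor (hZ : Subgroup.center G = ⊥) (φ : MulAut (ι → G))
    {i : ι} {n : ι → G} (hn : n ∈ (piFactor G i).map φ.toMonoidHom) (j : ι) :
    Pi.mulSingle j (n j) ∈ (piFactor G i).map φ.toMonoidHom := by
  have : ((piFactor G i).map φ.toMonoidHom).Normal :=
    (piFactor_normal i).map _ φ.surjective
  rw [Subgroup.mem_map_equiv]
  refine mem_piFactor_of_forall_commutator_mem hZ fun h => ?_
  rw [← φ.symm_apply_apply h, ← map_commutatorElement, ← Subgroup.mem_map_equiv,
    commutator_mulSingle_apply]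
  exact Subgroup.commutator_le_left _ ⊤ (Subgroup.commutator_mem_commutator hn trivial)

theorem exists_map_piFactor_le (hZ : Subgroup.center G = ⊥) (hG : Indecomposable G)
    [Nontrivial G] (φ : MulAut (ι → G)) (i : ι) :
    ∃ j, (piFactor G i).map φ.toMonoidHom ≤ piFactor G j := by
  set ψ : G →* (ι → G) := φ.toMonoidHom.comp (MonoidHom.mulSingle (fun _ => G) i)
  have hψ : Function.Injective ψ := φ.injective.comp (Pi.mulSingle_injective (M := fun _ => G) i)
  have hrange : ψ.range = (piFactor G i).map φ.toMonoidHom := MonoidHom.range_comp _ _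
  obtain ⟨g, hg⟩ := exists_ne (1 : G)
  obtain ⟨j, hj⟩ : ∃ j, ψ g j ≠ 1 := by
    by_contra! h
    exact hg (hψ (by simpa [funext_iff] using h))
  have hproj : ∀ x, ∃ a, ψ a = Pi.mulSingle j (ψ x j) := fun x => by
    rw [← MonoidHom.mem_range, hrange]
    exact mulSingle_apply_mem_map_piFactor hZ φ (hrange ▸ ⟨x, rfl⟩) j
  choose p hp using hproj
  set A := (piFactor G j).comap ψ
  set B := (Pi.evalMonoidHom (fun _ => G) j).ker.comap ψ
  have hAB : A ⊓ B = ⊥ := by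
    refine (Subgroup.eq_bot_iff_forall _).mpr fun x ⟨hxA, hxB⟩ => hψ ?_
    have hxB : ψ x j = 1 := hxB
    rw [map_one, ← mulSingle_apply_self_of_mem_piFactor hxA, hxB, Pi.mulSingle_one]
  have hA : ∀ x, p x ∈ A := fun x => by
    rw [Subgroup.mem_comap, hp]
    exact mulSingle_mem_piFactor _ _
  have hB : ∀ x, (p x)⁻¹ * x ∈ B := fun x => by
    show ψ ((p x)⁻¹ * x) j = 1
    simp [hp]
  have hsup : A ⊔ B = ⊤ := eq_top_iff.mpr fun x _ => by
    simpa using Subgroup.mul_mem_sup (hA x) (hB x)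
  rcases hG.eq_bot_or_eq_bot hAB hsup with hA' | hB'
  · have : p g = 1 := (Subgroup.mem_bot).mp (hA' ▸ hA g)
    exact absurd (by simpa [this] using (congr_fun (hp g) j).symm) hj
  · refine ⟨j, hrange ▸ ?_⟩
    rintro _ ⟨x, rfl⟩
    have : p x = x := inv_mul_eq_one.mp ((Subgroup.mem_bot).mp (hB' ▸ hB x))
    exact this ▸ hA x

theorem exists_map_piFactor_eq (hZ : Subgroup.center G = ⊥) (hG : Indecomposable G)
    [Nontrivial G] (φ : MulAut (ι → G)) (i : ι) :
    ∃ j, (piFactor G i).map φ.toMonoidHom = piFactor G j := by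
  obtain ⟨j, hij⟩ := exists_map_piFactor_le hZ hG φ i
  obtain ⟨k, hjk⟩ := exists_map_piFactor_le hZ hG φ.symm j
  have hback : ∀ x ∈ piFactor G j, φ.symm x ∈ piFactor G k := fun x hx => hjk ⟨x, hx, rfl⟩
  obtain rfl : i = k :=
    eq_of_piFactor_le fun y hy => by simpa using hback _ (hij ⟨y, hy, rfl⟩)
  exact ⟨j, le_antisymm hij fun x hx => Subgroup.mem_map_equiv.mpr (hback x hx)⟩

end AutPi

section PiCongrRight

variable {ι : Type*} {G : Type u} [Group G]

@[simp] theorem mulAutArrow_perm_symm_apply (σ : Equiv.Perm ι) (f : ι → G) (j : ι) :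
    (mulAutArrow σ).symm f j = f (σ j) := rfl

variable (ι G) in
def piCongrRightHom : (ι → MulAut G) →* MulAut (ι → G) where
  toFun := MulEquiv.piCongrRight
  map_one' := rfl
  map_mul' _ _ := rfl

@[simp] theorem piCongrRightHom_apply (ψ : ι → MulAut G) (f : ι → G) (j : ι) :
    piCongrRightHom ι G ψ f j = ψ j (f j) := rfl

theorem piCongrRightHom_conj (c : ι → G) :
    piCongrRightHom ι G (fun j => MulAut.conj (c j)) = MulAut.conj c := rfl

variable [DecidableEq ι]

theorem map_mulAutArrow_piFactor (σ : Equiv.Perm ι) (i : ι) :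
    (piFactor G i).map (mulAutArrow σ).toMonoidHom = piFactor G (σ i) := by
  ext f
  rw [Subgroup.mem_map_equiv, mem_piFactor, mem_piFactor]
  exact σ.forall_congr fun {j} => by rw [mulAutArrow_perm_symm_apply, σ.injective.ne_iff]

theorem exists_piCongrRightHom_eq (hZ : Subgroup.center G = ⊥) (φ : MulAut (ι → G))
    (hφ : ∀ j, (piFactor G j).map φ.toMonoidHom = piFactor G j) :
    ∃ ψ, piCongrRightHom ι G ψ = φ := by
  let ψ₀ (j : ι) : G →* G :=
    (Pi.evalMonoidHom _ j).comp (φ.toMonoidHom.comp (MonoidHom.mulSingle (fun _ => G) j))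
  have hψ₀ (j : ι) (g : G) : Pi.mulSingle j (ψ₀ j g) = φ (Pi.mulSingle j g) :=
    mulSingle_apply_self_of_mem_piFactor (hφ j ▸ ⟨_, mulSingle_mem_piFactor j g, rfl⟩)
  have hbij (j : ι) : Function.Bijective (ψ₀ j) := by
    refine ⟨fun g g' h => Pi.mulSingle_injective j (φ.injective ?_), fun x => ?_⟩
    · rw [← hψ₀, ← hψ₀, h]
    · obtain ⟨_, ⟨g, rfl⟩, hg⟩ := (hφ j).symm ▸ mulSingle_mem_piFactor j x
      exact ⟨g, by simpa [ψ₀] using congr_fun hg j⟩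
  refine ⟨fun j => MulEquiv.ofBijective (ψ₀ j) (hbij j), MulEquiv.ext fun f => funext fun j => ?_⟩
  set b := (Pi.mulSingle j (f j))⁻¹ * f
  have hb : φ b j = 1 := apply_eq_one_of_forall_commute hZ fun g => by
    obtain ⟨_, ⟨g', rfl⟩, hg'⟩ := (hφ j).symm ▸ mulSingle_mem_piFactor j g
    rw [← hg']
    exact (commute_mulSingle_of_apply_eq_one (by simp [b]) g').map φ
  calc piCongrRightHom ι G _ f j = φ (Pi.mulSingle j (f j)) j * φ b j := by
        rw [hb, mul_one, ← hψ₀]; simp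
    _ = φ f j := by rw [← Pi.mul_apply, ← map_mul, mul_inv_cancel_left]

end PiCongrRight

section Wreath

variable {ι : Type*} {G : Type u} [Group G]

variable (ι G) in
abbrev AutWreath : Type _ := (ι → MulAut G) ⋊[mulAutArrow] Equiv.Perm ι

variable (ι G) in
def toAutPi : AutWreath ι G →* MulAut (ι → G) :=
  SemidirectProduct.lift (piCongrRightHom ι G) mulAutArrow fun σ =>
    MonoidHom.ext fun ψ => MulEquiv.ext fun f => funext fun j => by
      show ψ (σ⁻¹ j) (f j) = ψ (σ⁻¹ j) (f (σ (σ⁻¹ j)))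
      simp

theorem toAutPi_injective [Nontrivial G] : Function.Injective (toAutPi ι G) := by
  classical
  refine (injective_iff_map_eq_one _).mpr fun w hw => ?_
  have h (f : ι → G) (j : ι) : w.left j (f (w.right⁻¹ j)) = f j := congr_fun (congr($hw f)) j
  obtain ⟨g, hg⟩ := exists_ne (1 : G)
  have hright : w.right = 1 := Equiv.ext fun j => by
    rw [Equiv.Perm.one_apply]
    by_contra hj
    simpa [Pi.mulSingle_eq_of_ne hj, hg] using h (Pi.mulSingle j g) (w.right j)
  have hleft : w.left = 1 := funext fun j => MulEquiv.ext fun x => by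
    have := h (Pi.mulSingle j x) j
    rwa [hright, inv_one, Equiv.Perm.one_apply, Pi.mulSingle_eq_same] at this
  exact SemidirectProduct.ext hleft hright

theorem toAutPi_surjective [DecidableEq ι] (hZ : Subgroup.center G = ⊥) (hG : Indecomposable G)
    [Nontrivial G] : Function.Surjective (toAutPi ι G) := by
  intro φ
  choose σ hσ using exists_map_piFactor_eq hZ hG φ
  have hσ_inj : Function.Injective σ := fun i i' h =>
    eq_of_piFactor_le (G := G) (Subgroup.map_injective φ.injective (by rw [hσ, hσ, h])).le
  have hσ_surj : Function.Surjective σ := fun j => by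
    obtain ⟨k, hk⟩ := exists_map_piFactor_eq hZ hG φ.symm j
    refine ⟨k, eq_of_piFactor_le (G := G) (le_of_eq ?_)⟩
    ext x
    rw [← hσ, ← hk, Subgroup.mem_map_equiv, Subgroup.mem_map_equiv, MulEquiv.symm_symm,
      MulEquiv.apply_symm_apply]
  set π := Equiv.ofBijective σ ⟨hσ_inj, hσ_surj⟩
  obtain ⟨ψ, hψ⟩ := exists_piCongrRightHom_eq hZ (φ * (mulAutArrow π)⁻¹) fun j => by
    obtain ⟨i, rfl⟩ := π.surjective j
    have hcomp : (φ * mulAutArrow π⁻¹).toMonoidHom =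
        φ.toMonoidHom.comp (mulAutArrow π⁻¹).toMonoidHom := rfl
    rw [← map_inv, hcomp, ← Subgroup.map_map, map_mulAutArrow_piFactor,
      Equiv.Perm.coe_inv, Equiv.symm_apply_apply]
    exact hσ i
  refine ⟨SemidirectProduct.inl ψ * SemidirectProduct.inr π, ?_⟩
  rw [map_mul, toAutPi, SemidirectProduct.lift_inl, SemidirectProduct.lift_inr, hψ,
    inv_mul_cancel_right]

end Wreath

section AlmostComplete

variable {ι : Type*} [DecidableEq ι] {G : Type u} [Group G]

open QuotientGroup SemidirectProduct in
theorem exists_retraction_autPi (hZ : Subgroup.center G = ⊥) (hG : Indecomposable G)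
    [Nontrivial G] {r : MulAut G →* MulAut G} (hr : Inn G ≤ r.ker)
    (hrq : (mk' (Inn G)).comp r = mk' (Inn G)) :
    ∃ R : MulAut (ι → G) →* MulAut (ι → G),
      Inn (ι → G) ≤ R.ker ∧ (mk' (Inn (ι → G))).comp R = mk' (Inn (ι → G)) := by
  let e : AutWreath ι G ≃* MulAut (ι → G) :=
    MulEquiv.ofBijective _ ⟨toAutPi_injective, toAutPi_surjective hZ hG⟩
  let rW : AutWreath ι G →* AutWreath ι G :=
    SemidirectProduct.map (r.compLeft ι) (MonoidHom.id _) fun _ => MonoidHom.ext fun _ => rfl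
  have hinl (ψ : ι → MulAut G) :
      (piCongrRightHom ι G ψ : MulAut (ι → G) ⧸ Inn (ι → G)) = piCongrRightHom ι G (r ∘ ψ) := by
    have hψ (j : ι) : (ψ j)⁻¹ * r (ψ j) ∈ Inn G := QuotientGroup.eq.mp congr($hrq (ψ j)).symm
    choose c hc using hψ
    rw [QuotientGroup.eq, ← map_inv, ← map_mul]
    exact ⟨c, (piCongrRightHom_conj c).symm.trans congr(piCongrRightHom ι G $(funext hc))⟩
  have hcomm : (mk' (Inn (ι → G))).comp ((toAutPi ι G).comp rW) =
      (mk' (Inn (ι → G))).comp (toAutPi ι G) :=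
    hom_ext (MonoidHom.ext fun ψ => by
        simp only [MonoidHom.comp_apply, rW, SemidirectProduct.map_inl, toAutPi, lift_inl,
          mk'_apply]
        exact (hinl ψ).symm)
      (MonoidHom.ext fun σ => by
        simp only [MonoidHom.comp_apply, rW, SemidirectProduct.map_inr]
        rfl)
  refine ⟨(toAutPi ι G).comp (rW.comp e.symm.toMonoidHom), ?_, MonoidHom.ext fun x => ?_⟩
  · rintro _ ⟨c, rfl⟩
    have hc : e.symm (MulAut.conj c) = inl fun j => MulAut.conj (c j) :=
      e.symm_apply_eq.mpr (piCongrRightHom_conj c).symm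
    have hrc : (r.compLeft ι fun j => MulAut.conj (c j)) = 1 := funext fun j => hr ⟨c j, rfl⟩
    simp [MonoidHom.mem_ker, hc, rW, hrc]
  · exact congr($hcomm (e.symm x)).trans congr(mk' _ $(e.apply_symm_apply x))

theorem almostComplete_pi (hac : AlmostComplete G) (hG : Indecomposable G) :
    AlmostComplete (ι → G) := by
  obtain ⟨hZ, r, hr, hrq⟩ := (almostComplete_iff G).mp hac
  refine (almostComplete_iff _).mpr ⟨by simp [Subgroup.center_pi, hZ, Subgroup.pi_bot], ?_⟩
  rcases subsingleton_or_nontrivial G with hG₁ | hG₁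
  · have : Subsingleton (MulAut (ι → G)) := ⟨fun _ _ => MulEquiv.ext fun _ => Subsingleton.elim _ _⟩
    exact ⟨1, fun _ _ => rfl, MonoidHom.ext fun x => congrArg _ (Subsingleton.elim 1 x)⟩
  · exact exists_retraction_autPi hZ hG hr hrq

end AlmostComplete

theorem statement3_general (G : Type u) [Group G]
    (hac : AlmostComplete G) (hind : Indecomposable G) (t : ℕ) :
    AlmostComplete (Fin t → G) :=
  almostComplete_pi hac hind

/-- If `G` is a finite almost complete indecomposable group, then for every
positive integer `t` the group `Gᵗ` is almost complete. -/
theorem statement3 (G : Type u) [Group G] [Finite G]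
    (hac : AlmostComplete G) (hind : Indecomposable G) (t : ℕ) (ht : 0 < t) :
    AlmostComplete (Fin t → G) :=
  statement3_general G hac hind t
end

section
/- Let $H_1, \dots, H_r$ be finite almost complete groups such that no pair $H_i, H_j$ ($i \neq j$) has a common nontrivial direct factor. Then the direct product $\prod_{i=1}^r H_i$ is almost complete. -/
/-- `D` is a direct factor of `G` if `G ≅ D × B` for some group `B`. -/
def IsDirectFactor (D G : Type u) [Group D] [Group G] : Prop :=
  ∃ (B : Type u) (_ : Group B), Nonempty (G ≃* D × B)

/-! Write `G = ∏ₖ Hₖ` and fix an automorphism `φ`. The coordinate subgroup `Hᵢ` and the subgroup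
of elements trivial at `i` commute and together exhaust `G`; so do their images `M = φ(Hᵢ)` and `M'`.
Projecting to a coordinate `j` splits `Hⱼ` the same way into the projections `Dⱼ` of `M` and `Dⱼ'`
of `M'`, and as `Hⱼ` is centerless the two meet trivially: `Hⱼ = Dⱼ × Dⱼ'`. Since `G` is centerless
too, `M = ∏ₖ Dₖ`, so `Dⱼ` is also a direct factor of `Hᵢ ≅ M`, hence trivial for `j ≠ i`. Thus
every automorphism of `G` acts coordinatewise, `Aut(G) = ∏ₖ Aut(Hₖ)`, and the product of sections
`Out(Hₖ) → Aut(Hₖ)` is a section for `G`. -/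

namespace Subgroup

variable {G : Type*} [Group G]

structure IsCentralProduct (A B : Subgroup G) : Prop where
  commute : ∀ a ∈ A, ∀ b ∈ B, Commute a b
  exists_mul_eq : ∀ g, ∃ a ∈ A, ∃ b ∈ B, a * b = g

namespace IsCentralProduct

variable {A B : Subgroup G}

theorem map {Q : Type*} [Group Q] {f : G →* Q} (hf : Function.Surjective f)
    (h : IsCentralProduct A B) : IsCentralProduct (A.map f) (B.map f) where
  commute := by
    rintro _ ⟨a, ha, rfl⟩ _ ⟨b, hb, rfl⟩
    exact (h.commute a ha b hb).map f
  exists_mul_eq q := by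
    obtain ⟨g, rfl⟩ := hf q
    obtain ⟨a, ha, b, hb, rfl⟩ := h.exists_mul_eq g
    exact ⟨f a, mem_map_of_mem f ha, f b, mem_map_of_mem f hb, (map_mul f a b).symm⟩

theorem inf_le_center (h : IsCentralProduct A B) : A ⊓ B ≤ center G := by
  rintro x ⟨hxA, hxB⟩
  rw [mem_center_iff]
  intro g
  obtain ⟨a, ha, b, hb, rfl⟩ := h.exists_mul_eq g
  exact ((h.commute a ha x hxB).mul_left (h.commute x hxA b hb).symm).eq

theorem disjoint (h : IsCentralProduct A B) (hZ : center G = ⊥) : Disjoint A B := by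
  rw [disjoint_iff, eq_bot_iff, ← hZ]
  exact h.inf_le_center

theorem eq_of_le_of_disjoint {A' : Subgroup G} (h : IsCentralProduct A B) (hle : A ≤ A')
    (hdisj : Disjoint A' B) : A' = A := by
  refine le_antisymm (fun x hx => ?_) hle
  obtain ⟨a, ha, b, hb, rfl⟩ := h.exists_mul_eq x
  have hb1 : b = 1 :=
    disjoint_def.1 hdisj (by simpa using A'.mul_mem (A'.inv_mem (hle ha)) hx) hb
  simpa [hb1] using ha

end IsCentralProduct

end Subgroup

theorem Subgroup.IsCentralProduct.isDirectFactor {G : Type u} [Group G] {A B : Subgroup G}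
    (h : A.IsCentralProduct B) (hdisj : Disjoint A B) : IsDirectFactor A G := by
  let f := MonoidHom.noncommCoprod A.subtype B.subtype fun a b => h.commute a a.2 b b.2
  have hinj : Function.Injective f :=
    (MonoidHom.noncommCoprod_injective _ _ _).2
      ⟨A.subtype_injective, B.subtype_injective, by simpa only [Subgroup.range_subtype] using hdisj⟩
  have hsurj : Function.Surjective f := fun g => by
    obtain ⟨a, ha, b, hb, rfl⟩ := h.exists_mul_eq g
    exact ⟨(⟨a, ha⟩, ⟨b, hb⟩), rfl⟩
  exact ⟨B, inferInstance, ⟨(MulEquiv.ofBijective f ⟨hinj, hsurj⟩).symm⟩⟩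

theorem IsDirectFactor.of_mulEquiv {D G G' : Type u} [Group D] [Group G] [Group G']
    (h : IsDirectFactor D G) (e : G ≃* G') : IsDirectFactor D G' := by
  obtain ⟨B, _, ⟨e'⟩⟩ := h
  exact ⟨B, inferInstance, ⟨e.symm.trans e'⟩⟩

-- `ι : Type` keeps `∀ k, D k` in the universe of the `D k`, as `IsDirectFactor` requires.
theorem isDirectFactor_pi {ι : Type} [DecidableEq ι] (D : ι → Type u) [∀ k, Group (D k)]
    (j : ι) : IsDirectFactor (D j) (∀ k, D k) :=
  ⟨∀ k : {k // k ≠ j}, D k, inferInstance,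
    ⟨{ Equiv.piSplitAt j D with map_mul' := fun _ _ => rfl }⟩⟩

theorem inv_mul_mem_inn_of_section {G : Type*} [Group G] {s : (MulAut G ⧸ Inn G) →* MulAut G}
    (hs : (QuotientGroup.mk' (Inn G)).comp s = MonoidHom.id _) (φ : MulAut G) :
    φ⁻¹ * s φ ∈ Inn G :=
  QuotientGroup.eq.1 (DFunLike.congr_fun hs (φ : MulAut G ⧸ Inn G)).symm

theorem AlmostComplete.of_inn_le_ker {G : Type*} [Group G] (hZ : Subgroup.center G = ⊥)
    (Ψ : MulAut G →* MulAut G) (hker : Inn G ≤ Ψ.ker) (hΨ : ∀ φ, φ⁻¹ * Ψ φ ∈ Inn G) :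
    AlmostComplete G := by
  refine ⟨hZ, QuotientGroup.lift _ Ψ hker, ?_⟩
  ext φ
  exact (QuotientGroup.eq.2 (hΨ φ)).symm

section Pi

variable {ι : Type*} {H : ι → Type*} [∀ i, Group (H i)]

def Subgroup.piUnivEquiv (D : ∀ i, Subgroup (H i)) :
    Subgroup.pi Set.univ D ≃* ∀ i, D i where
  toFun x i := ⟨x.1 i, x.2 i trivial⟩
  invFun y := ⟨fun i => y i, fun i _ => (y i).2⟩
  left_inv _ := rfl
  right_inv _ := rfl
  map_mul' _ _ := rfl

theorem Subgroup.isCentralProduct_range_mulSingle_ker_eval [DecidableEq ι] (i : ι) :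
    IsCentralProduct (MonoidHom.mulSingle H i).range (Pi.evalMonoidHom H i).ker where
  commute := by
    rintro _ ⟨x, rfl⟩ y (hy : y i = 1)
    funext k
    rcases eq_or_ne k i with rfl | hk
    · simp [hy]
    · simp [hk]
  exists_mul_eq g :=
    ⟨Pi.mulSingle i (g i), ⟨g i, rfl⟩, (Pi.mulSingle i (g i))⁻¹ * g,
      by simp [MonoidHom.mem_ker], mul_inv_cancel_left _ _⟩

theorem Subgroup.center_pi_eq_bot (hZ : ∀ i, Subgroup.center (H i) = ⊥) :
    Subgroup.center (∀ i, H i) = ⊥ := by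
  simp only [Subgroup.center_pi, hZ, Subgroup.pi_bot]

def MulAut.piCongrRight : (∀ i, MulAut (H i)) →* MulAut (∀ i, H i) where
  toFun := MulEquiv.piCongrRight
  map_one' := rfl
  map_mul' _ _ := rfl

@[simp]
theorem MulAut.piCongrRight_apply (a : ∀ i, MulAut (H i)) (x : ∀ i, H i) (i : ι) :
    MulAut.piCongrRight a x i = a i (x i) :=
  rfl

theorem MulAut.piCongrRight_conj (g : ∀ i, H i) :
    MulAut.piCongrRight (fun i => MulAut.conj (g i)) = MulAut.conj g := by
  ext x i
  rfl

theorem MulAut.piCongrRight_injective :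
    Function.Injective (MulAut.piCongrRight : (∀ i, MulAut (H i)) →* MulAut (∀ i, H i)) := by
  classical
  intro a b hab
  funext i
  ext x
  simpa using congr_fun (DFunLike.congr_fun hab (Pi.mulSingle i x)) i

theorem MulAut.piCongrRight_surjective [Finite ι] [DecidableEq ι]
    (h : ∀ (φ : MulAut (∀ i, H i)) (i : ι) (x : H i) (j : ι), j ≠ i → φ (Pi.mulSingle i x) j = 1) :
    Function.Surjective (MulAut.piCongrRight : (∀ i, MulAut (H i)) →* MulAut (∀ i, H i)) := by
  have hsingle : ∀ (φ : MulAut (∀ i, H i)) i x,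
      Pi.mulSingle i (φ (Pi.mulSingle i x) i) = φ (Pi.mulSingle i x) := fun φ i x => by
    funext j
    rcases eq_or_ne j i with rfl | hj
    · simp
    · simp [hj, h φ i x j hj]
  intro φ
  let a : ∀ i, MulAut (H i) := fun i =>
    { toFun x := φ (Pi.mulSingle i x) i
      invFun x := φ⁻¹ (Pi.mulSingle i x) i
      left_inv x := by simp [hsingle]
      right_inv x := by simp [hsingle]
      map_mul' x y := by simp [Pi.mulSingle_mul] }
  refine ⟨a, MulEquiv.toMonoidHom_injective (MonoidHom.pi_ext fun i x => ?_)⟩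
  change MulAut.piCongrRight a (Pi.mulSingle i x) = φ (Pi.mulSingle i x)
  rw [← hsingle φ]
  funext j
  exact Pi.apply_mulSingle (fun i => a i) (fun i => map_one (a i)) i x j

theorem almostComplete_pi_s4 (hac : ∀ i, AlmostComplete (H i))
    (hsurj : Function.Surjective
      (MulAut.piCongrRight : (∀ i, MulAut (H i)) →* MulAut (∀ i, H i))) :
    AlmostComplete (∀ i, H i) := by
  choose s hs using fun i => (hac i).2
  let e := MulEquiv.ofBijective MulAut.piCongrRight ⟨MulAut.piCongrRight_injective, hsurj⟩
  let Ψ : MulAut (∀ i, H i) →* MulAut (∀ i, H i) :=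
    MulAut.piCongrRight.comp <| (MonoidHom.pi fun i =>
      (s i).comp ((QuotientGroup.mk' (Inn (H i))).comp (Pi.evalMonoidHom _ i))).comp
        e.symm.toMonoidHom
  have hΨ : ∀ a, Ψ (MulAut.piCongrRight a) = MulAut.piCongrRight fun i => s i (a i) := fun a => by
    have : e.symm (MulAut.piCongrRight a) = a := e.symm_apply_apply a
    simp only [Ψ, MonoidHom.comp_apply, MulEquiv.coe_toMonoidHom, this]
    rfl
  refine AlmostComplete.of_inn_le_ker (Subgroup.center_pi_eq_bot fun i => (hac i).1) Ψ ?_ fun φ => ?_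
  · rintro _ ⟨g, rfl⟩
    have hinn : ∀ i, ((MulAut.conj (g i) : MulAut (H i)) : MulAut (H i) ⧸ Inn (H i)) = 1 :=
      fun i => (QuotientGroup.eq_one_iff _).2 ⟨g i, rfl⟩
    rw [MonoidHom.mem_ker, ← MulAut.piCongrRight_conj, hΨ]
    simp only [hinn, map_one]
    exact map_one _
  · obtain ⟨a, rfl⟩ := hsurj φ
    choose g hg using fun i => inv_mul_mem_inn_of_section (hs i) (a i)
    refine ⟨g, ?_⟩
    rw [hΨ, ← map_inv, ← map_mul, ← MulAut.piCongrRight_conj]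
    congr 1
    funext i
    exact hg i

end Pi

theorem MulAut.apply_mulSingle_apply_of_ne {ι : Type} [DecidableEq ι] {H : ι → Type u}
    [∀ i, Group (H i)] (hZ : ∀ i, Subgroup.center (H i) = ⊥)
    (hfac : ∀ i j, i ≠ j → ∀ (D : Type u) (_ : Group D), ¬ Subsingleton D →
      IsDirectFactor D (H i) → ¬ IsDirectFactor D (H j))
    (φ : MulAut (∀ i, H i)) {i j : ι} (hij : i ≠ j) (x : H i) :
    φ (Pi.mulSingle i x) j = 1 := by
  set ψ := φ.toMonoidHom.comp (MonoidHom.mulSingle H i)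
  let M' := (Pi.evalMonoidHom H i).ker.map φ.toMonoidHom
  have hMM' : Subgroup.IsCentralProduct ψ.range M' := by
    rw [MonoidHom.range_comp]
    exact (Subgroup.isCentralProduct_range_mulSingle_ker_eval i).map φ.surjective
  let D k := ψ.range.map (Pi.evalMonoidHom H k)
  have hDD' k : Subgroup.IsCentralProduct (D k) (M'.map (Pi.evalMonoidHom H k)) :=
    hMM'.map (Function.surjective_eval k)
  have hdisj k := (hDD' k).disjoint (hZ k)
  have hrange : Subgroup.pi Set.univ D = ψ.range := by
    refine hMM'.eq_of_le_of_disjoint (fun m hm k _ => Subgroup.mem_map_of_mem _ hm) ?_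
    refine Subgroup.disjoint_def.2 fun {m} hm hm' => funext fun k => ?_
    exact Subgroup.disjoint_def.1 (hdisj k) (hm k trivial) (Subgroup.mem_map_of_mem _ hm')
  have hψ : Function.Injective ψ := φ.injective.comp (Pi.mulSingle_injective i)
  have hfac_j : IsDirectFactor (D j) (H j) := (hDD' j).isDirectFactor (hdisj j)
  have hfac_i : IsDirectFactor (D j) (H i) :=
    (isDirectFactor_pi (fun k => D k) j).of_mulEquiv <| (Subgroup.piUnivEquiv D).symm.trans <|
      (MulEquiv.subgroupCongr hrange).trans (MonoidHom.ofInjective hψ).symm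
  have : Subsingleton (D j) := not_not.1 fun hD => hfac i j hij _ _ hD hfac_i hfac_j
  have hxD : φ (Pi.mulSingle i x) j ∈ D j := Subgroup.mem_map_of_mem _ ⟨x, rfl⟩
  exact congrArg Subtype.val (Subsingleton.elim (⟨_, hxD⟩ : D j) 1)

theorem statement4_general (r : ℕ) (H : Fin r → Type u) (instG : ∀ i, Group (H i))
    (hac : ∀ i, AlmostComplete (H i))
    (hfac : ∀ i j, i ≠ j → ∀ (D : Type u) (_ : Group D), ¬ Subsingleton D →
      IsDirectFactor D (H i) → ¬ IsDirectFactor D (H j)) :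
    AlmostComplete (∀ i, H i) :=
  almostComplete_pi_s4 hac <| MulAut.piCongrRight_surjective fun φ _ x _ hji =>
    MulAut.apply_mulSingle_apply_of_ne (fun k => (hac k).1) hfac φ hji.symm x

/-- Let `H₁, …, Hᵣ` be finite almost complete groups such that no pair
`Hᵢ, Hⱼ` (`i ≠ j`) has a common nontrivial direct factor. Then `∏ᵢ Hᵢ` is almost complete. -/
theorem statement4 (r : ℕ) (H : Fin r → Type u) (instG : ∀ i, Group (H i))
    (instF : ∀ i, Finite (H i)) (hac : ∀ i, AlmostComplete (H i))
    (hfac : ∀ i j, i ≠ j → ∀ (D : Type u) (_ : Group D), ¬ Subsingleton D →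
      IsDirectFactor D (H i) → ¬ IsDirectFactor D (H j)) :
    AlmostComplete (∀ i, H i) :=
  statement4_general r H instG hac hfac
end

section
/- Let $\Gamma$ be a group, $\Delta \leq \Gamma$ a subgroup acting trivially on a group $E$. Let $\sigma$ be a homomorphic section of $E^{\Delta\backslash\Gamma} \rtimes \Gamma \to \Gamma$, written $\sigma(\gamma) = ((e_i(\gamma))_{i \in \Delta\backslash\Gamma}, \gamma)$, where $\Gamma$ acts on $E^{\Delta\backslash\Gamma}$ by permuting coordinates via the right coset action. Then the map $\delta \mapsto e_1(\delta)$ (where $1$ is the trivial coset) is a group homomorphism $\Delta \to E$. -/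
variable {Γ : Type*} [Group Γ]

/-- The right action of `Γ` on the right coset space `Δ\Γ`. -/
def cosetSmul (Δ : Subgroup Γ) (γ : Γ) :
    Quotient (QuotientGroup.rightRel Δ) → Quotient (QuotientGroup.rightRel Δ) :=
  Quotient.map' (· * γ) (by
    intro a b h
    rw [QuotientGroup.rightRel_apply] at h ⊢
    simpa [mul_assoc] using h)

lemma cosetSmul_mk (Δ : Subgroup Γ) (γ x : Γ) :
    cosetSmul Δ γ (Quotient.mk'' x) = Quotient.mk'' (x * γ) := rfl

lemma cosetSmul_mul (Δ : Subgroup Γ) (γ γ' : Γ) (j : Quotient (QuotientGroup.rightRel Δ)) :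
    cosetSmul Δ γ' (cosetSmul Δ γ j) = cosetSmul Δ (γ * γ') j := by
  induction j using Quotient.inductionOn' with
  | h x => simp [cosetSmul_mk, mul_assoc]

lemma cosetSmul_one (Δ : Subgroup Γ) (j : Quotient (QuotientGroup.rightRel Δ)) :
    cosetSmul Δ 1 j = j := by
  induction j using Quotient.inductionOn' with
  | h x => simp [cosetSmul_mk]

/-- The (left) action of `Γ` on `E^{Δ\Γ}` permuting coordinates via the right coset action:
`(γ • e)ⱼ = e_{j·γ}`. -/
def permAction (Δ : Subgroup Γ) (E : Type*) [Group E] :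
    Γ →* MulAut (Quotient (QuotientGroup.rightRel Δ) → E) where
  toFun γ :=
    { toFun := fun e j => e (cosetSmul Δ γ j)
      invFun := fun e j => e (cosetSmul Δ γ⁻¹ j)
      left_inv := fun e => funext fun j => by
        show e (cosetSmul Δ γ (cosetSmul Δ γ⁻¹ j)) = e j
        rw [cosetSmul_mul, inv_mul_cancel, cosetSmul_one]
      right_inv := fun e => funext fun j => by
        show e (cosetSmul Δ γ⁻¹ (cosetSmul Δ γ j)) = e j
        rw [cosetSmul_mul, mul_inv_cancel, cosetSmul_one]
      map_mul' := fun _ _ => rfl }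
  map_one' := by
    apply MulEquiv.ext
    intro e
    funext j
    simp [cosetSmul_one]
  map_mul' γ γ' := by
    apply MulEquiv.ext
    intro e
    funext j
    show e (cosetSmul Δ (γ * γ') j) = e (cosetSmul Δ γ' (cosetSmul Δ γ j))
    rw [cosetSmul_mul]

/-- the Shapiro map for a trivial `Δ`-action. Let `Δ ≤ Γ` act trivially on
a group `E`, and let `σ` be a homomorphic section of `E^{Δ\Γ} ⋊ Γ → Γ`, written
`σ γ = ((eᵢ(γ))ᵢ, γ)`, where `Γ` acts on `E^{Δ\Γ}` by permuting coordinates via the right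
coset action. Then `δ ↦ e₁(δ)` (evaluation at the trivial coset) is a group homomorphism
`Δ → E`. -/
theorem statement9 (Δ : Subgroup Γ) (E : Type*) [Group E]
    (σ : Γ →* (Quotient (QuotientGroup.rightRel Δ) → E) ⋊[permAction Δ E] Γ)
    (hσ : ∀ γ, (σ γ).right = γ) :
    ∃ h : Δ →* E, ∀ δ : Δ, h δ = (σ (δ : Γ)).left (Quotient.mk'' (1 : Γ)) := by
  have key : ∀ δ : Δ, Quotient.mk'' ((δ : Γ)) = (Quotient.mk'' (1 : Γ) :
      Quotient (QuotientGroup.rightRel Δ)) := by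
    intro δ
    apply Quotient.sound'
    rw [QuotientGroup.rightRel_apply]
    simpa using δ.2
  refine ⟨MonoidHom.mk' (fun δ => (σ (δ : Γ)).left (Quotient.mk'' (1 : Γ))) ?_, fun δ => rfl⟩
  intro δ δ'
  have h1 : (σ ((δ : Γ) * (δ' : Γ))).left = (σ (δ : Γ)).left *
      permAction Δ E (σ (δ : Γ)).right (σ (δ' : Γ)).left := by
    rw [map_mul, SemidirectProduct.mul_left]
  have := congrFun h1 (Quotient.mk'' (1 : Γ))
  push_cast
  rw [this]
  simp only [hσ, Pi.mul_apply]
  congr 1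
  show (σ (δ' : Γ)).left (cosetSmul Δ (δ : Γ) (Quotient.mk'' 1)) = _
  rw [cosetSmul_mk, one_mul, key]
end

section
/- Let $k$ be a field of characteristic $0$ and $B$ a field containing $k$. Then there is no injective group homomorphism from the symmetric group $\mathfrak{S}_5$ into $\mathrm{PGL}_2(B)$. -/
/-!
The function `x = tr² / det` is well defined and conjugation invariant on `PGL₂(K)`, and
`x(s²) = (x(s) - 2)²`. If `s` has order `5`, its eigenvalues have ratio a primitive fifth root of
unity `ζ`, so `x(s) = 2 + ζ + ζ⁻¹` is a root of `X² - 3X + 1`. The symmetric group `𝔖₅` contains a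
`5`-cycle `σ` conjugate to `σ²` (the Frobenius group of order `20`), so an embedding would give
`x = (x - 2)²` as well; the two equations force `2x = 3` and then `5 = 0`.
-/

open Matrix
open scoped MatrixGroups

namespace Matrix

variable {R : Type*} [CommRing R]

theorem mul_self_fin_two (M : Matrix (Fin 2) (Fin 2) R) :
    M * M = M.trace • M - M.det • 1 := by
  ext i j
  fin_cases i <;> fin_cases j <;>
    simp [mul_apply, trace_fin_two, det_fin_two] <;> ring

theorem trace_mul_self_fin_two (M : Matrix (Fin 2) (Fin 2) R) :
    (M * M).trace = M.trace ^ 2 - 2 * M.det := by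
  rw [mul_self_fin_two, trace_sub, trace_smul, trace_smul, trace_one]
  simp only [smul_eq_mul, Fintype.card_fin, Nat.cast_ofNat]
  ring

theorem smul_sub_smul_one_mul_fin_two (M : Matrix (Fin 2) (Fin 2) R) (a b : R) :
    (a • M - b • 1) * M = (a * M.trace - b) • M - (a * M.det) • 1 := by
  rw [sub_mul, smul_mul_assoc, smul_mul_assoc, one_mul, mul_self_fin_two]
  module

theorem pow_five_fin_two (M : Matrix (Fin 2) (Fin 2) R) :
    M ^ 5 = (M.trace ^ 4 - 3 * M.trace ^ 2 * M.det + M.det ^ 2) • M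
      - (M.trace ^ 3 * M.det - 2 * M.trace * M.det ^ 2) • 1 := by
  rw [pow_succ, pow_succ, pow_succ, pow_two, mul_self_fin_two, smul_sub_smul_one_mul_fin_two,
    smul_sub_smul_one_mul_fin_two, smul_sub_smul_one_mul_fin_two]
  congr 2 <;> ring

end Matrix

namespace Matrix.GeneralLinearGroup

variable {n K : Type*} [Fintype n] [DecidableEq n]

theorem val_mul_scalar {R : Type*} [CommRing R] (g : GL n R) (u : Rˣ) :
    (g * scalar n u).val = (u : R) • g.val := by
  rw [Units.val_mul, coe_scalar, Matrix.scalar_apply, ← smul_one_eq_diagonal, Matrix.mul_smul,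
    Matrix.mul_one]

variable [Field K]

theorem mem_center_of_smul_val_eq_smul_one {g : GL n K} {c a : K} (hc : c ≠ 0)
    (h : c • g.val = a • 1) : g ∈ Subgroup.center (GL n K) := by
  refine mem_center_iff_val_mem_range_scalar.mpr ⟨c⁻¹ * a, ?_⟩
  rw [scalar_apply, ← smul_one_eq_diagonal, mul_smul, ← h, inv_smul_smul₀ hc]

end Matrix.GeneralLinearGroup

namespace Matrix.ProjGenLinGroup

variable {K : Type*} [Field K]

def traceSqDivDet : PGL(2, K) → K :=
  Quotient.lift (fun g : GL (Fin 2) K => g.val.trace ^ 2 / g.val.det) fun g₁ g₂ h => by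
    obtain ⟨u, rfl⟩ := mk_eq_mk_iff.mp (Quotient.sound h)
    have hd := g₁.det_ne_zero
    simp only [GeneralLinearGroup.val_mul_scalar, trace_smul, det_smul, Fintype.card_fin,
      smul_eq_mul]
    field_simp

@[simp]
theorem traceSqDivDet_mk (g : GL (Fin 2) K) :
    traceSqDivDet (mk g) = g.val.trace ^ 2 / g.val.det := rfl

theorem traceSqDivDet_conj (s t : PGL(2, K)) :
    traceSqDivDet (t * s * t⁻¹) = traceSqDivDet s := by
  induction s using induction_on with | mk g =>
  induction t using induction_on with | mk h =>
  rw [← map_inv, ← map_mul, ← map_mul, traceSqDivDet_mk, traceSqDivDet_mk, Units.val_mul,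
    Units.val_mul, trace_units_conj, det_units_conj]

theorem traceSqDivDet_sq (s : PGL(2, K)) : traceSqDivDet (s ^ 2) = (traceSqDivDet s - 2) ^ 2 := by
  induction s using induction_on with | mk g =>
  have hd := g.det_ne_zero
  rw [← map_pow, traceSqDivDet_mk, traceSqDivDet_mk, Units.val_pow_eq_pow_val, pow_two g.val,
    trace_mul_self_fin_two, det_mul]
  field_simp

theorem traceSqDivDet_of_pow_five_eq_one {s : PGL(2, K)} (hs : s ^ 5 = 1) (hs1 : s ≠ 1) :
    traceSqDivDet s ^ 2 - 3 * traceSqDivDet s + 1 = 0 := by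
  induction s using induction_on with | mk g =>
  rw [← map_pow, mk_eq_one] at hs
  rw [Ne, mk_eq_one] at hs1
  obtain ⟨a, ha⟩ := GeneralLinearGroup.mem_center_iff_val_mem_range_scalar.mp hs
  set M := g.val
  have hM5 : M ^ 5 = a • 1 := by
    rw [← Units.val_pow_eq_pow_val, ← ha, scalar_apply, smul_one_eq_diagonal]
  have hd := g.det_ne_zero
  have hA : M.trace ^ 4 - 3 * M.trace ^ 2 * M.det + M.det ^ 2 = 0 := by
    by_contra hA
    -- otherwise `M` is scalar by `pow_five_fin_two`
    refine hs1 (GeneralLinearGroup.mem_center_of_smul_val_eq_smul_one hA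
      (a := a + (M.trace ^ 3 * M.det - 2 * M.trace * M.det ^ 2)) ?_)
    rw [add_smul a, ← hM5, pow_five_fin_two]
    abel
  rw [traceSqDivDet_mk]
  field_simp
  linear_combination hA

theorem eq_one_of_pow_five_of_conj_eq_sq (h5 : (5 : K) ≠ 0) {s t : PGL(2, K)} (hs : s ^ 5 = 1)
    (hts : t * s * t⁻¹ = s ^ 2) : s = 1 := by
  by_contra hs1
  have hfix : traceSqDivDet s = (traceSqDivDet s - 2) ^ 2 := by
    rw [← traceSqDivDet_sq, ← hts, traceSqDivDet_conj]
  have hquad := traceSqDivDet_of_pow_five_eq_one hs hs1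
  -- subtracting the two quadratics gives `2x = 3`
  exact h5 (by
    linear_combination (2 * traceSqDivDet s - 7) * hquad + (2 * traceSqDivDet s - 3) * hfix)

end Matrix.ProjGenLinGroup

/-- If `B` is a field of characteristic `0`, then there is no injective
group homomorphism from the symmetric group `𝔖₅` into `PGL₂(B) = GL₂(B)/B^×`
(the quotient of `GL₂(B)` by its center, the scalar matrices). -/
theorem statement17 (B : Type*) [Field B] [CharZero B] :
    ¬ ∃ f : Equiv.Perm (Fin 5) →*
        (GL (Fin 2) B ⧸ Subgroup.center (GL (Fin 2) B)),
      Function.Injective f := by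
  rintro ⟨f, hf⟩
  set σ : Equiv.Perm (Fin 5) := finRotate 5
  -- multiplication by `2` on `ℤ/5ℤ`
  set τ : Equiv.Perm (Fin 5) := c[1, 2, 4, 3]
  have hσ5 : σ ^ 5 = 1 := by decide
  have hσ1 : σ ≠ 1 := by decide
  have hτσ : τ * σ * τ⁻¹ = σ ^ 2 := by decide
  have hfσ5 : f σ ^ 5 = 1 := by rw [← map_pow, hσ5, map_one]
  have hfτσ : f τ * f σ * (f τ)⁻¹ = f σ ^ 2 := by
    rw [← map_inv, ← map_mul, ← map_mul, hτσ, map_pow]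
  have hfσ : f σ = 1 := ProjGenLinGroup.eq_one_of_pow_five_of_conj_eq_sq (by norm_num) hfσ5 hfτσ
  exact hσ1 (hf (hfσ.trans (map_one f).symm))
end
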